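/- Let A₁ := {(x,y,z) ∈ ℝ³ : x² + y² = z²}. Then LD_0(A₁) = A₁ and L𝒢D_0(A₁) = {(x,y,z) ∈ ℝ³ : z² ≤ x² + y²}. -/

import Mathlib

/-!
The cone `A = {x² + y² = z²}` is closed and invariant under nonnegative scaling, so its
directions at the vertex are just its unit vectors. At a point `q ≠ 0` the cone is a smooth
surface with normal `(q₀, q₁, -q₂)`, so every direction `u` at `q` satisfies
`q₀u₀ + q₁u₁ = q₂u₂`, and Cauchy–Schwarz together with `q₀² + q₁² = q₂²` gives
`u₂² ≤ u₀² + u₁²`. Conversely, a unit vector `a` with `a₂² ≤ a₀² + a₁²` is tangent to the cone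
along the whole ray through some `(c₀, c₁, 1)` with `c₀a₀ + c₁a₁ = a₂`, and points of that
ray tend to the vertex.
-/

open Filter Topology Set Asymptotics

variable {E : Type*} [NormedAddCommGroup E] [NormedSpace ℝ E]

/-- The direction set `D_p(A)`. -/
def dirSet (A : Set E) (p : E) : Set E :=
  {a | ‖a‖ = 1 ∧ ∃ x : ℕ → E, (∀ i, x i ∈ A ∧ x i ≠ p) ∧
    Tendsto x atTop (𝓝 p) ∧
    Tendsto (fun i => ‖x i - p‖⁻¹ • (x i - p)) atTop (𝓝 a)}

/-- The real tangent cone `LD_p(A)`. -/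
def LDir (A : Set E) (p : E) : Set E :=
  {w | ∃ a ∈ dirSet A p, ∃ t : ℝ, 0 ≤ t ∧ w = t • a}

/-- Condition (SSP) at `p`. -/
def SSP (A : Set E) (p : E) : Prop :=
  ∀ a : ℕ → E, (∀ m, a m ≠ p) → Tendsto a atTop (𝓝 p) →
    (∃ d ∈ dirSet A p, Tendsto (fun m => ‖a m - p‖⁻¹ • (a m - p)) atTop (𝓝 d)) →
    ∃ b : ℕ → E, (∀ m, b m ∈ A) ∧
      Tendsto (fun m => ‖a m - b m‖ / ‖a m - p‖) atTop (𝓝 0) ∧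
      Tendsto (fun m => ‖a m - b m‖ / ‖b m - p‖) atTop (𝓝 0)

/-- The geometric directional bundle fiber `𝒢D_p(A)`. -/
def GDir (A : Set E) (p : E) : Set E :=
  {a | ‖a‖ = 1 ∧ ∃ q : ℕ → E, (∀ m, q m ∈ A) ∧ Tendsto q atTop (𝓝 p) ∧
    ∃ u : ℕ → E, (∀ m, u m ∈ dirSet A (q m)) ∧ Tendsto u atTop (𝓝 a)}

/-- The cone `L𝒢D_p(A)` over the geometric directional bundle fiber. -/
def LGDir (A : Set E) (p : E) : Set E :=
  {w | ∃ a ∈ GDir A p, ∃ t : ℝ, 0 ≤ t ∧ w = t • a}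

/-- A bi-Lipschitz homeomorphism of `E`: a bijection which is Lipschitz with
Lipschitz inverse (equivalently, antilipschitz). -/
def IsBiLipschitz (h : E → E) : Prop :=
  Function.Bijective h ∧ ∃ K K' : NNReal, LipschitzWith K h ∧ AntilipschitzWith K' h

lemma mem_dirSet_of_eventually {A : Set E} {p a : E} {x : ℕ → E} (ha : ‖a‖ = 1)
    (hx : ∀ᶠ i in atTop, x i ∈ A ∧ x i ≠ p) (hxp : Tendsto x atTop (𝓝 p))
    (hdir : Tendsto (fun i => ‖x i - p‖⁻¹ • (x i - p)) atTop (𝓝 a)) :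
    a ∈ dirSet A p := by
  obtain ⟨N, hN⟩ := eventually_atTop.mp hx
  exact ⟨ha, fun i => x (i + N), fun i => hN _ (Nat.le_add_left N i),
    (tendsto_add_atTop_iff_nat N).mpr hxp, (tendsto_add_atTop_iff_nat N).mpr hdir⟩

lemma mem_dirSet_of_hasDerivAt {A : Set E} {q a : E} {γ : ℝ → E} (ha : ‖a‖ = 1)
    (hγ0 : γ 0 = q) (hγ : HasDerivAt γ a 0) (hγA : ∀ t > 0, γ t ∈ A) :
    a ∈ dirSet A q := by
  set t : ℕ → ℝ := fun i => 1 / ((i : ℝ) + 1)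
  have ht_pos : ∀ i, 0 < t i := fun i => by positivity
  have ht : Tendsto t atTop (𝓝[≠] 0) :=
    tendsto_nhdsWithin_iff.mpr ⟨tendsto_one_div_add_atTop_nhds_zero_nat,
      Eventually.of_forall fun i => (ht_pos i).ne'⟩
  have hslope : Tendsto (fun i => slope γ 0 (t i)) atTop (𝓝 a) :=
    (hasDerivAt_iff_tendsto_slope.mp hγ).comp ht
  have hsub : ∀ i, γ (t i) - q = t i • slope γ 0 (t i) := fun i => by
    rw [slope_def_module, hγ0, sub_zero, smul_inv_smul₀ (ht_pos i).ne']
  have ha0 : a ≠ 0 := norm_ne_zero_iff.mp (by rw [ha]; exact one_ne_zero)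
  refine mem_dirSet_of_eventually (x := fun i => γ (t i)) ha ?_ ?_ ?_
  · filter_upwards [hslope.eventually_ne ha0] with i hi
    refine ⟨hγA _ (ht_pos i), fun h => hi ?_⟩
    simpa [h, (ht_pos i).ne'] using (hsub i).symm
  · exact hγ0 ▸ hγ.continuousAt.tendsto.comp (ht.mono_right nhdsWithin_le_nhds)
  · have hnorm : Tendsto (fun i => ‖slope γ 0 (t i)‖⁻¹ • slope γ 0 (t i)) atTop
        (𝓝 (‖a‖⁻¹ • a)) :=
      (hslope.norm.inv₀ (norm_ne_zero_iff.mpr ha0)).smul hslope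
    rw [ha, inv_one, one_smul] at hnorm
    refine hnorm.congr fun i => ?_
    rw [hsub, norm_smul, Real.norm_of_nonneg (ht_pos i).le, mul_inv, mul_smul,
      smul_comm, inv_smul_smul₀ (ht_pos i).ne']

lemma HasFDerivAt.apply_eq_zero_of_mem_dirSet {F : Type*} [NormedAddCommGroup F]
    [NormedSpace ℝ F] {f : E → F} {f' : E →L[ℝ] F} {A : Set E} {q u : E}
    (hf : HasFDerivAt f f' q) (hA : ∀ x ∈ A, f x = f q) (hu : u ∈ dirSet A q) :
    f' u = 0 := by
  obtain ⟨-, x, hx, hxq, hdir⟩ := hu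
  have hlim := (hasFDerivAt_iff_tendsto.mp hf).comp hxq
  have hlim' : Tendsto (fun i => ‖f' (‖x i - q‖⁻¹ • (x i - q))‖) atTop (𝓝 0) := by
    refine hlim.congr fun i => ?_
    rw [Function.comp_apply, hA _ (hx i).1, sub_self, zero_sub, norm_neg, map_smul, norm_smul,
      Real.norm_of_nonneg (inv_nonneg.mpr (norm_nonneg _))]
  exact norm_eq_zero.mp (tendsto_nhds_unique ((f'.continuous.tendsto u).comp hdir).norm hlim')

def IsCone (A : Set E) : Prop := ∀ c : ℝ, 0 ≤ c → ∀ x ∈ A, c • x ∈ A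

lemma IsCone.dirSet_zero_subset {A : Set E} (hA : IsCone A) (hAc : IsClosed A) :
    dirSet A 0 ⊆ A := by
  rintro a ⟨-, x, hx, -, hdir⟩
  refine hAc.mem_of_tendsto hdir (Eventually.of_forall fun i => ?_)
  simpa using hA _ (inv_nonneg.mpr (norm_nonneg _)) _ (hx i).1

lemma IsCone.mem_dirSet_zero {A : Set E} (hA : IsCone A) {a : E} (haA : a ∈ A)
    (ha : ‖a‖ = 1) : a ∈ dirSet A 0 :=
  mem_dirSet_of_hasDerivAt ha (zero_smul ℝ a)
    (by simpa using (hasDerivAt_id (0 : ℝ)).smul_const a) fun t ht => hA t ht.le a haA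

lemma IsCone.setOf_nonneg_smul_eq {S B : Set E} (hB : IsCone B) (hSB : S ⊆ B)
    (hBS : ∀ v ∈ B, ‖v‖ = 1 → v ∈ S) (hB0 : ∃ v ∈ B, v ≠ 0) :
    {w | ∃ a ∈ S, ∃ t : ℝ, 0 ≤ t ∧ w = t • a} = B := by
  have hunit : ∀ v ∈ B, v ≠ 0 → ‖v‖⁻¹ • v ∈ S := fun v hv hv0 =>
    hBS _ (hB _ (inv_nonneg.mpr (norm_nonneg v)) v hv) (norm_smul_inv_norm hv0)
  ext w
  constructor
  · rintro ⟨a, haS, t, ht, rfl⟩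
    exact hB t ht a (hSB haS)
  · intro hw
    rcases eq_or_ne w 0 with rfl | hw0
    · obtain ⟨v, hv, hv0⟩ := hB0
      exact ⟨_, hunit v hv hv0, 0, le_rfl, (zero_smul ℝ _).symm⟩
    · exact ⟨_, hunit w hw hw0, ‖w‖, norm_nonneg w,
        (smul_inv_smul₀ (norm_ne_zero_iff.mpr hw0) w).symm⟩

local notation "ℝ³" => EuclideanSpace ℝ (Fin 3)

def lightCone : Set ℝ³ := {v | v 0 ^ 2 + v 1 ^ 2 = v 2 ^ 2}

def nonTimelike : Set ℝ³ := {v | v 2 ^ 2 ≤ v 0 ^ 2 + v 1 ^ 2}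

lemma norm_sq_eq_sum_sq (v : ℝ³) : ‖v‖ ^ 2 = v 0 ^ 2 + v 1 ^ 2 + v 2 ^ 2 := by
  simp [EuclideanSpace.norm_sq_eq, Fin.sum_univ_three]

lemma isClosed_lightCone : IsClosed lightCone :=
  isClosed_eq (by fun_prop) (by fun_prop)

lemma isClosed_nonTimelike : IsClosed nonTimelike :=
  isClosed_le (by fun_prop) (by fun_prop)

lemma isCone_lightCone : IsCone lightCone := by
  intro c _ v (hv : v 0 ^ 2 + v 1 ^ 2 = v 2 ^ 2)
  change (c • v) 0 ^ 2 + (c • v) 1 ^ 2 = (c • v) 2 ^ 2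
  simp only [PiLp.smul_apply, smul_eq_mul]
  linear_combination c ^ 2 * hv

lemma isCone_nonTimelike : IsCone nonTimelike := by
  intro c _ v (hv : v 2 ^ 2 ≤ v 0 ^ 2 + v 1 ^ 2)
  change (c • v) 2 ^ 2 ≤ (c • v) 0 ^ 2 + (c • v) 1 ^ 2
  simp only [PiLp.smul_apply, smul_eq_mul]
  nlinarith [sq_nonneg c]

lemma lightCone_subset_nonTimelike : lightCone ⊆ nonTimelike :=
  fun _ (hv : _ = _) => hv.ge

lemma exists_ne_zero_mem_lightCone : ∃ v ∈ lightCone, v ≠ 0 :=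
  ⟨!₂[1, 0, 1], by simp [lightCone], fun h => by simpa using congrArg (fun v : ℝ³ => v 0) h⟩

lemma hasFDerivAt_lightConeForm (q : ℝ³) :
    HasFDerivAt (fun v : ℝ³ => v 0 ^ 2 + v 1 ^ 2 - v 2 ^ 2)
      ((2 * q 0) • EuclideanSpace.proj (0 : Fin 3) + (2 * q 1) • EuclideanSpace.proj (1 : Fin 3)
        - (2 * q 2) • EuclideanSpace.proj (2 : Fin 3) : ℝ³ →L[ℝ] ℝ) q := by
  have h0 := ((EuclideanSpace.proj (0 : Fin 3) : ℝ³ →L[ℝ] ℝ).hasFDerivAt (x := q)).pow 2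
  have h1 := ((EuclideanSpace.proj (1 : Fin 3) : ℝ³ →L[ℝ] ℝ).hasFDerivAt (x := q)).pow 2
  have h2 := ((EuclideanSpace.proj (2 : Fin 3) : ℝ³ →L[ℝ] ℝ).hasFDerivAt (x := q)).pow 2
  refine ((h0.add h1).sub h2).congr_fderiv ?_
  ext v
  simp

lemma orthogonal_of_mem_dirSet_lightCone {q u : ℝ³} (hq : q ∈ lightCone)
    (hu : u ∈ dirSet lightCone q) : q 0 * u 0 + q 1 * u 1 = q 2 * u 2 := by
  have hlevel : ∀ v ∈ lightCone, v 0 ^ 2 + v 1 ^ 2 - v 2 ^ 2 = q 0 ^ 2 + q 1 ^ 2 - q 2 ^ 2 :=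
    fun v (hv : _ = _) => by rw [hv, hq, sub_self, sub_self]
  have h := (hasFDerivAt_lightConeForm q).apply_eq_zero_of_mem_dirSet hlevel hu
  simp only [sub_apply, add_apply, smul_apply, PiLp.proj_apply, smul_eq_mul] at h
  linarith

/-- Cauchy–Schwarz: `(q₂u₂)² = (q₀u₀ + q₁u₁)² ≤ (q₀² + q₁²)(u₀² + u₁²) = q₂²(u₀² + u₁²)`. -/
lemma mem_nonTimelike_of_orthogonal {q u : ℝ³} (hq : q ∈ lightCone) (hq2 : q 2 ≠ 0)
    (horth : q 0 * u 0 + q 1 * u 1 = q 2 * u 2) : u ∈ nonTimelike := by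
  have hq' : q 0 ^ 2 + q 1 ^ 2 = q 2 ^ 2 := hq
  have key : q 2 ^ 2 * (u 0 ^ 2 + u 1 ^ 2 - u 2 ^ 2) = (q 0 * u 1 - q 1 * u 0) ^ 2 := by
    linear_combination -(u 0 ^ 2 + u 1 ^ 2) * hq' + (q 0 * u 0 + q 1 * u 1 + q 2 * u 2) * horth
  have hnonneg : 0 ≤ u 0 ^ 2 + u 1 ^ 2 - u 2 ^ 2 :=
    nonneg_of_mul_nonneg_right (key ▸ sq_nonneg _) (by positivity)
  change u 2 ^ 2 ≤ u 0 ^ 2 + u 1 ^ 2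
  linarith

lemma dirSet_lightCone_subset_nonTimelike {q : ℝ³} (hq : q ∈ lightCone) :
    dirSet lightCone q ⊆ nonTimelike := by
  intro u hu
  by_cases hq2 : q 2 = 0
  · have hq0 : q = 0 := by
      have hq' : q 0 ^ 2 + q 1 ^ 2 = q 2 ^ 2 := hq
      have : ‖q‖ ^ 2 = 0 := by rw [norm_sq_eq_sum_sq, hq', hq2]; ring
      exact norm_eq_zero.mp (pow_eq_zero_iff two_ne_zero |>.mp this)
    subst hq0
    exact lightCone_subset_nonTimelike
      (isCone_lightCone.dirSet_zero_subset isClosed_lightCone hu)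
  · exact mem_nonTimelike_of_orthogonal hq hq2 (orthogonal_of_mem_dirSet_lightCone hq hu)

lemma mem_dirSet_lightCone_of_orthogonal {q a : ℝ³} (hq : q ∈ lightCone) (hq2 : 0 < q 2)
    (ha : ‖a‖ = 1) (horth : q 0 * a 0 + q 1 * a 1 = q 2 * a 2) :
    a ∈ dirSet lightCone q := by
  have hq' : q 0 ^ 2 + q 1 ^ 2 = q 2 ^ 2 := hq
  have hlin : ∀ i, HasDerivAt (fun t : ℝ => q i + t * a i) (a i) 0 := fun i => by
    simpa using ((hasDerivAt_id (0 : ℝ)).mul_const (a i)).const_add (q i)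
  -- Moving along `a` and correcting the height back onto the cone; tangency makes the
  -- correction of second order.
  set h : ℝ → ℝ := fun t => √((q 0 + t * a 0) ^ 2 + (q 1 + t * a 1) ^ 2) - (q 2 + t * a 2)
  have hh : HasDerivAt h 0 0 := by
    have hsqrt := (((hlin 0).pow 2).add ((hlin 1).pow 2)).sqrt (by simp [hq', hq2.ne'])
    refine (hsqrt.sub (hlin 2)).congr_deriv ?_
    simp only [Pi.add_apply, Pi.pow_apply, zero_mul, add_zero, Nat.cast_ofNat, Nat.add_one_sub_one,
      pow_one, hq', Real.sqrt_sq hq2.le]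
    field_simp
    linear_combination horth
  refine mem_dirSet_of_hasDerivAt
    (γ := fun t => q + t • a + h t • EuclideanSpace.single (2 : Fin 3) (1 : ℝ)) ha ?_ ?_ ?_
  · simp [h, hq', Real.sqrt_sq hq2.le]
  · exact ((((hasDerivAt_id (0 : ℝ)).smul_const a).const_add q).add
      (hh.smul_const _)).congr_deriv (by simp)
  · intro t _
    change (_ : ℝ) ^ 2 + _ ^ 2 = _ ^ 2
    simp [h, Real.sq_sqrt (by positivity : (0 : ℝ) ≤ (q 0 + t * a 0) ^ 2 + (q 1 + t * a 1) ^ 2)]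

lemma exists_sq_add_sq_eq_one_of_sq_le {a₀ a₁ b : ℝ} (hpos : 0 < a₀ ^ 2 + a₁ ^ 2)
    (hb : b ^ 2 ≤ a₀ ^ 2 + a₁ ^ 2) : ∃ c₀ c₁ : ℝ, c₀ ^ 2 + c₁ ^ 2 = 1 ∧ c₀ * a₀ + c₁ * a₁ = b := by
  set β := √(a₀ ^ 2 + a₁ ^ 2 - b ^ 2)
  have hβ : β ^ 2 = a₀ ^ 2 + a₁ ^ 2 - b ^ 2 := Real.sq_sqrt (by linarith)
  refine ⟨(b * a₀ + β * a₁) / (a₀ ^ 2 + a₁ ^ 2), (b * a₁ - β * a₀) / (a₀ ^ 2 + a₁ ^ 2), ?_, ?_⟩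
  · field_simp
    linear_combination (a₀ ^ 2 + a₁ ^ 2) * hβ
  · field_simp
    ring

lemma mem_GDir_lightCone {a : ℝ³} (haB : a ∈ nonTimelike) (ha : ‖a‖ = 1) :
    a ∈ GDir lightCone 0 := by
  have haB' : a 2 ^ 2 ≤ a 0 ^ 2 + a 1 ^ 2 := haB
  have hpos : 0 < a 0 ^ 2 + a 1 ^ 2 := by
    have := norm_sq_eq_sum_sq a
    rw [ha] at this
    linarith
  obtain ⟨c₀, c₁, hc, horth⟩ := exists_sq_add_sq_eq_one_of_sq_le hpos haB'
  set w : ℝ³ := !₂[c₀, c₁, 1]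
  have hw : w ∈ lightCone := by simp [lightCone, w, hc]
  set s : ℕ → ℝ := fun m => 1 / ((m : ℝ) + 1)
  have hs : ∀ m, 0 < s m := fun m => by positivity
  refine ⟨ha, fun m => s m • w, fun m => isCone_lightCone _ (hs m).le w hw, ?_,
    fun _ => a, fun m => ?_, tendsto_const_nhds⟩
  · simpa [s] using (tendsto_one_div_add_atTop_nhds_zero_nat (𝕜 := ℝ)).smul_const w
  · refine mem_dirSet_lightCone_of_orthogonal (isCone_lightCone _ (hs m).le w hw)
      (by simpa [w] using hs m) ha ?_
    simp only [PiLp.smul_apply, smul_eq_mul, w, Matrix.cons_val_zero, Matrix.cons_val_one,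
      Matrix.cons_val, mul_one]
    linear_combination s m * horth

lemma GDir_lightCone_zero_subset_nonTimelike : GDir lightCone 0 ⊆ nonTimelike := by
  rintro a ⟨-, q, hq, -, u, hu, hua⟩
  exact isClosed_nonTimelike.mem_of_tendsto hua
    (Eventually.of_forall fun m => dirSet_lightCone_subset_nonTimelike (hq m) (hu m))

theorem stmt12 :
    LDir {v : EuclideanSpace ℝ (Fin 3) | v 0 ^ 2 + v 1 ^ 2 = v 2 ^ 2} 0
        = {v : EuclideanSpace ℝ (Fin 3) | v 0 ^ 2 + v 1 ^ 2 = v 2 ^ 2} ∧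
    LGDir {v : EuclideanSpace ℝ (Fin 3) | v 0 ^ 2 + v 1 ^ 2 = v 2 ^ 2} 0
        = {v : EuclideanSpace ℝ (Fin 3) | v 2 ^ 2 ≤ v 0 ^ 2 + v 1 ^ 2} := by
  have hB0 : ∃ v ∈ nonTimelike, v ≠ 0 := exists_ne_zero_mem_lightCone.imp fun _ ⟨hv, hv0⟩ =>
    ⟨lightCone_subset_nonTimelike hv, hv0⟩
  exact ⟨isCone_lightCone.setOf_nonneg_smul_eq
      (isCone_lightCone.dirSet_zero_subset isClosed_lightCone)
      (fun _ hv hv1 => isCone_lightCone.mem_dirSet_zero hv hv1) exists_ne_zero_mem_lightCone,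
    isCone_nonTimelike.setOf_nonneg_smul_eq GDir_lightCone_zero_subset_nonTimelike
      (fun _ hv hv1 => mem_GDir_lightCone hv hv1) hB0⟩
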